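/- arXiv:2304.05597 — 4 statements merged into one kernel-verified Lean document; each statement's English description precedes it below -/
import Mathlib

section
/- Let A be an n×n real matrix with nonnegative entries whose absolute row sums are all at most γ ∈ [0,1) (i.e., ‖A‖_∞ ≤ γ), let ε > 0 satisfy γ + ε < 1, and let M = Σ_{k=0}^∞ (γ+ε)^{−2k} (Aᵏ)ᵀ Aᵏ. Then the minimum eigenvalue of M satisfies λ_min(M) ≥ 1 and the maximum eigenvalue satisfies λ_max(M) ≤ n / (1 − (γ/(γ+ε))²). -/
/-!
For a unit eigenvector `v` of `M` with eigenvalue `λ`, `λ = vᵀ M v = Σ_k (γ+ε)^{-2k} |Aᵏ v|²`.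
The `k = 0` term is `|v|² = 1` and all terms are nonnegative, so `λ ≥ 1`. Since
`‖Aᵏ‖_∞ ≤ γᵏ` and `v` has sup norm at most `1`, `|Aᵏ v|² ≤ n γ^{2k}`, so the series is dominated
by the geometric series `n Σ_k ((γ/(γ+ε))²)ᵏ = n / (1 - (γ/(γ+ε))²)`. The same bound on the entries
of `(Aᵏ)ᵀ Aᵏ` shows that the series defining `M` converges, so the `tsum` is not the junk value `0`.
-/

open Finset Matrix

theorem HasSum.dotProduct_mulVec {X m n R : Type*} [Fintype m] [Fintype n]
    [NonUnitalNonAssocSemiring R] [TopologicalSpace R] [IsTopologicalSemiring R]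
    {f : X → Matrix m n R} {M : Matrix m n R} (h : HasSum f M) (v : m → R) (w : n → R) :
    HasSum (fun k => v ⬝ᵥ (f k *ᵥ w)) (v ⬝ᵥ (M *ᵥ w)) :=
  hasSum_sum fun i _ => (hasSum_sum fun j _ =>
    ((Pi.hasSum.1 (Pi.hasSum.1 h i) j).mul_right (w j))).mul_left (v i)

namespace Matrix

variable {m n : Type*} [Fintype m] [Fintype n]

attribute [local instance] Matrix.linftyOpSeminormedAddCommGroup

theorem abs_dotProduct_le_card_mul (w u : n → ℝ) :
    |w ⬝ᵥ u| ≤ Fintype.card n * (‖w‖ * ‖u‖) := by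
  calc |w ⬝ᵥ u| ≤ ∑ i, |w i * u i| := abs_sum_le_sum_abs _ _
    _ ≤ ∑ _i : n, ‖w‖ * ‖u‖ := by
        gcongr with i
        rw [abs_mul]
        exact mul_le_mul (norm_le_pi_norm w i) (norm_le_pi_norm u i) (abs_nonneg _)
          (norm_nonneg _)
    _ = Fintype.card n * (‖w‖ * ‖u‖) := by
        rw [sum_const, card_univ, nsmul_eq_mul]

theorem dotProduct_smul_transpose_mul_self_mulVec (c : ℝ) (B : Matrix m n ℝ) (v : n → ℝ) :
    v ⬝ᵥ ((c • (Bᵀ * B)) *ᵥ v) = c * ((B *ᵥ v) ⬝ᵥ (B *ᵥ v)) := by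
  rw [smul_mulVec, dotProduct_smul, smul_eq_mul, ← mulVec_mulVec, dotProduct_mulVec,
    vecMul_transpose]

theorem norm_apply_le_linfty_opNorm {α : Type*} [SeminormedAddCommGroup α] (A : Matrix m n α)
    (i : m) (j : n) : ‖A i j‖ ≤ ‖A‖ := by
  have h : ‖A i j‖₊ ≤ ‖A‖₊ := by
    rw [linfty_opNNNorm_def]
    exact (single_le_sum (fun _ _ => zero_le) (mem_univ j)).trans
      (le_sup (f := fun i => ∑ j, ‖A i j‖₊) (mem_univ i))
  exact_mod_cast h

theorem linfty_opNorm_le_of_sum_norm_le {α : Type*} [SeminormedAddCommGroup α]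
    {A : Matrix m n α} {γ : ℝ} (hγ : 0 ≤ γ) (h : ∀ i, ∑ j, ‖A i j‖ ≤ γ) : ‖A‖ ≤ γ := by
  lift γ to NNReal using hγ
  rw [← coe_nnnorm, NNReal.coe_le_coe, linfty_opNNNorm_def]
  exact Finset.sup_le fun i _ => by rw [← NNReal.coe_le_coe, NNReal.coe_sum]; exact h i

theorem linfty_opNorm_pow_le [DecidableEq n] {A : Matrix n n ℝ} {γ : ℝ} (hA : ‖A‖ ≤ γ) (k : ℕ) :
    ‖A ^ k‖ ≤ γ ^ k := by
  induction k with
  | zero =>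
    rw [pow_zero, ← diagonal_one, linfty_opNorm_diagonal]
    exact (pi_norm_le_iff_of_nonneg zero_le_one).2 fun _ => norm_one.le
  | succ k ih =>
    rw [pow_succ, pow_succ]
    exact (linfty_opNorm_mul _ _).trans
      (mul_le_mul ih hA (norm_nonneg _) ((norm_nonneg _).trans ih))

theorem abs_transpose_mul_self_apply_le (B : Matrix m n ℝ) (a b : n) :
    |(Bᵀ * B) a b| ≤ Fintype.card m * ‖B‖ ^ 2 := by
  have hcol : ∀ j, ‖fun l => B l j‖ ≤ ‖B‖ := fun j =>
    (pi_norm_le_iff_of_nonneg (norm_nonneg B)).2 fun l => norm_apply_le_linfty_opNorm B l j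
  calc |(Bᵀ * B) a b| = |(fun l => B l a) ⬝ᵥ (fun l => B l b)| := rfl
    _ ≤ Fintype.card m * (‖fun l => B l a‖ * ‖fun l => B l b‖) := abs_dotProduct_le_card_mul _ _
    _ ≤ Fintype.card m * ‖B‖ ^ 2 := by
        rw [sq]
        gcongr
        exacts [hcol a, hcol b]

theorem mulVec_dotProduct_mulVec_self_le (B : Matrix m n ℝ) {v : n → ℝ} (hv : ‖v‖ ≤ 1) :
    (B *ᵥ v) ⬝ᵥ (B *ᵥ v) ≤ Fintype.card m * ‖B‖ ^ 2 := by
  have hBv : ‖B *ᵥ v‖ ≤ ‖B‖ :=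
    (linfty_opNorm_mulVec B v).trans (mul_le_of_le_one_right (norm_nonneg B) hv)
  calc (B *ᵥ v) ⬝ᵥ (B *ᵥ v) ≤ Fintype.card m * (‖B *ᵥ v‖ * ‖B *ᵥ v‖) :=
        (le_abs_self _).trans (abs_dotProduct_le_card_mul _ _)
    _ ≤ Fintype.card m * ‖B‖ ^ 2 := by
        rw [sq]
        gcongr

theorem summable_smul_transpose_mul_self {X : Type*} {c : X → ℝ} {B : X → Matrix m n ℝ}
    (h : Summable fun k => |c k| * ‖B k‖ ^ 2) :
    Summable fun k => c k • ((B k)ᵀ * B k) := by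
  refine Pi.summable.2 fun a => Pi.summable.2 fun b => ?_
  refine (h.mul_left (Fintype.card m : ℝ)).of_norm_bounded fun k => ?_
  rw [smul_apply, smul_eq_mul, Real.norm_eq_abs, abs_mul]
  calc |c k| * |((B k)ᵀ * B k) a b| ≤ |c k| * (Fintype.card m * ‖B k‖ ^ 2) := by
        gcongr
        exact abs_transpose_mul_self_apply_le _ a b
    _ = Fintype.card m * (|c k| * ‖B k‖ ^ 2) := by ring

namespace IsHermitian

variable [DecidableEq n] {M : Matrix n n ℝ} (hM : M.IsHermitian) {X : Type*} {c : X → ℝ}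
  {B : X → Matrix n n ℝ}

theorem hasSum_eigenvalues (hsum : HasSum (fun k => c k • ((B k)ᵀ * B k)) M) (i : n) :
    HasSum (fun k => c k * ((B k *ᵥ hM.eigenvectorBasis i) ⬝ᵥ (B k *ᵥ hM.eigenvectorBasis i)))
      (hM.eigenvalues i) := by
  rw [hM.eigenvalues_eq i, star_trivial, RCLike.re_to_real]
  simpa only [dotProduct_smul_transpose_mul_self_mulVec] using
    hsum.dotProduct_mulVec (hM.eigenvectorBasis i) (hM.eigenvectorBasis i)

theorem dotProduct_eigenvectorBasis_self (i : n) :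
    (hM.eigenvectorBasis i : n → ℝ) ⬝ᵥ hM.eigenvectorBasis i = 1 := by
  have h := real_inner_self_eq_norm_sq (hM.eigenvectorBasis i)
  rwa [hM.eigenvectorBasis.orthonormal.1 i, one_pow, EuclideanSpace.inner_eq_star_dotProduct,
    star_trivial] at h

theorem le_eigenvalues_of_hasSum (hsum : HasSum (fun k => c k • ((B k)ᵀ * B k)) M)
    (hc : ∀ k, 0 ≤ c k) (k₀ : X) (hB : B k₀ = 1) (i : n) : c k₀ ≤ hM.eigenvalues i := by
  have hterm := le_hasSum (hM.hasSum_eigenvalues hsum i) k₀ fun k _ =>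
    mul_nonneg (hc k) (Fintype.sum_nonneg fun _ => mul_self_nonneg _)
  rwa [hB, one_mulVec, hM.dotProduct_eigenvectorBasis_self, mul_one] at hterm

theorem eigenvalues_le_of_hasSum (hsum : HasSum (fun k => c k • ((B k)ᵀ * B k)) M)
    (hc : ∀ k, 0 ≤ c k) {g : X → ℝ} {s : ℝ} (hg : HasSum g s)
    (hcB : ∀ k, c k * ‖B k‖ ^ 2 ≤ g k) (i : n) :
    hM.eigenvalues i ≤ Fintype.card n * s := by
  have hv : ‖(hM.eigenvectorBasis i : n → ℝ)‖ ≤ 1 :=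
    (pi_norm_le_iff_of_nonneg zero_le_one).2 fun j =>
      hM.eigenvectorBasis.orthonormal.1 i ▸ PiLp.norm_apply_le _ j
  refine hasSum_le (fun k => ?_) (hM.hasSum_eigenvalues hsum i) (hg.mul_left _)
  calc c k * ((B k *ᵥ hM.eigenvectorBasis i) ⬝ᵥ (B k *ᵥ hM.eigenvectorBasis i))
      ≤ c k * (Fintype.card n * ‖B k‖ ^ 2) := by
        gcongr
        exacts [hc k, mulVec_dotProduct_mulVec_self_le (B k) hv]
    _ = Fintype.card n * (c k * ‖B k‖ ^ 2) := by ring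
    _ ≤ Fintype.card n * g k := by gcongr; exact hcB k

end IsHermitian

end Matrix

theorem stmt11_general (n : ℕ)
    (γ ε : ℝ) (hγ0 : 0 ≤ γ) (hε : 0 < ε)
    (A : Matrix (Fin n) (Fin n) ℝ)
    (hArow : ∀ i, ∑ j, |A i j| ≤ γ)
    (M : Matrix (Fin n) (Fin n) ℝ)
    (hM : M = ∑' k : ℕ, ((γ + ε)⁻¹ ^ (2 * k)) • ((A ^ k)ᵀ * A ^ k))
    (hHerm : M.IsHermitian) :
    ∀ i : Fin n,
      1 ≤ hHerm.eigenvalues i ∧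
        hHerm.eigenvalues i ≤ (n : ℝ) / (1 - (γ / (γ + ε)) ^ 2) := by
  let _ : SeminormedAddCommGroup (Matrix (Fin n) (Fin n) ℝ) := Matrix.linftyOpSeminormedAddCommGroup
  set c : ℕ → ℝ := fun k => (γ + ε)⁻¹ ^ (2 * k)
  set r := (γ / (γ + ε)) ^ 2
  have hr0 : 0 ≤ r := sq_nonneg _
  have hr1 : r < 1 :=
    pow_lt_one₀ (by positivity) ((div_lt_one (by positivity)).2 (by linarith)) two_ne_zero
  have hc0 : ∀ k, 0 ≤ c k := fun k => by positivity
  have hA : ‖A‖ ≤ γ := linfty_opNorm_le_of_sum_norm_le hγ0 hArow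
  have hweight : ∀ k, c k * ‖A ^ k‖ ^ 2 ≤ r ^ k := fun k => calc
    c k * ‖A ^ k‖ ^ 2 ≤ c k * (γ ^ k) ^ 2 := by gcongr; exact linfty_opNorm_pow_le hA k
    _ = r ^ k := by simp only [c, r]; ring
  have hseries : HasSum (fun k => c k • ((A ^ k)ᵀ * A ^ k)) M := by
    rw [hM]
    refine (summable_smul_transpose_mul_self ?_).hasSum
    refine (summable_geometric_of_lt_one hr0 hr1).of_nonneg_of_le (fun k => by positivity) ?_
    simpa only [abs_of_nonneg (hc0 _)] using hweight
  intro i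
  constructor
  · simpa [c] using hHerm.le_eigenvalues_of_hasSum hseries hc0 0 (pow_zero A) i
  · simpa [div_eq_mul_inv] using
      hHerm.eigenvalues_le_of_hasSum hseries hc0 (hasSum_geometric_of_lt_one hr0 hr1) hweight i

/-- for `M = Σ_k (γ+ε)^{−2k} (Aᵏ)ᵀ Aᵏ` as above, every eigenvalue of `M`
lies between `1` and `n / (1 − (γ/(γ+ε))²)`; i.e. `λ_min(M) ≥ 1` and
`λ_max(M) ≤ n / (1 − (γ/(γ+ε))²)`. -/
theorem stmt11 (n : ℕ) (hn : 1 ≤ n)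
    (γ ε : ℝ) (hγ0 : 0 ≤ γ) (hγ1 : γ < 1) (hε : 0 < ε) (hγε : γ + ε < 1)
    (A : Matrix (Fin n) (Fin n) ℝ)
    (hA0 : ∀ i j, 0 ≤ A i j) (hArow : ∀ i, ∑ j, |A i j| ≤ γ)
    (M : Matrix (Fin n) (Fin n) ℝ)
    (hM : M = ∑' k : ℕ, ((γ + ε)⁻¹ ^ (2 * k)) • ((A ^ k)ᵀ * A ^ k))
    (hHerm : M.IsHermitian) :
    ∀ i : Fin n,
      1 ≤ hHerm.eigenvalues i ∧
        hHerm.eigenvalues i ≤ (n : ℝ) / (1 - (γ / (γ + ε)) ^ 2) :=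
  stmt11_general n γ ε hγ0 hε A hArow M hM hHerm
end

section
/- Let Q* be a fixed point of the Bellman operator F, let π* be a greedy policy with respect to Q*, let ε > 0 satisfy γ + ε < 1, let w ∈ ℝ^{S×A} be entrywise strictly positive, and let v = Σ_{i=0}^∞ (γ+ε)^{−i} (A_{π*}ᵀ)ⁱ w. Then for every Q ∈ ℝ^{S×A} with Q ≤ Q* entrywise, (γ+ε) · vᵀ(Q − Q*) ≤ vᵀ(F Q − Q*) ≤ 0. -/
open Finset Matrix

/-- The Bellman operator `F` for a discounted MDP:
`(F Q)(s,a) = R(s,a) + γ * Σ_{s'} P(s'|s,a) * max_{a'} Q(s',a')`. -/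
noncomputable def bellman {S A : Type*} [Fintype S] [Fintype A] [Nonempty A]
    (γ : ℝ) (P : S → A → S → ℝ) (R : S → A → ℝ) (Q : S × A → ℝ) : S × A → ℝ :=
  fun p =>
    R p.1 p.2 +
      γ * ∑ s' : S, P p.1 p.2 s' * Finset.univ.sup' Finset.univ_nonempty (fun a' => Q (s', a'))

/-- The matrix of the linear map `A_π` on `ℝ^{S×A}` associated with a deterministic
policy `π : S → A`: `(A_π x)(s,a) = γ * Σ_{s'} P(s'|s,a) * x(s', π(s'))`.
Its entry at row `(s,a)`, column `(s',a')` is `γ * P(s'|s,a)` if `a' = π s'`, else `0`. -/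
noncomputable def polMat {S A : Type*} [Fintype S] [Fintype A] [DecidableEq A]
    (γ : ℝ) (P : S → A → S → ℝ) (π : S → A) : Matrix (S × A) (S × A) ℝ :=
  Matrix.of fun p q => if q.2 = π q.1 then γ * P p.1 p.2 q.1 else 0

/-!
With `β = γ + ε`, `K` the row-stochastic transition matrix of `π*` and `M = γ K = A_{π*}`, the
vector `v = Σ (β⁻¹ Mᵀ)ⁱ w` is a convergent Neumann series (`β⁻¹ γ < 1`), nonnegative, and satisfies
`Mᵀ v = β (v - w) ≤ β v`. Since `π*` is greedy for `Q* = F Q*`, we have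
`M (Q - Q*) ≤ F Q - F Q* = F Q - Q*`, and `F Q ≤ Q*` by monotonicity of `F`. Pairing with `v ≥ 0`
and using `Q - Q* ≤ 0` gives `β vᵀ(Q - Q*) ≤ (Mᵀ v)ᵀ(Q - Q*) = vᵀ M (Q - Q*) ≤ vᵀ(F Q - Q*) ≤ 0`.
-/

namespace Matrix

variable {ι : Type*} [Fintype ι]

theorem dotProduct_le_dotProduct_of_nonpos_right {u v w : ι → ℝ} (huv : u ≤ v) (hw : w ≤ 0) :
    v ⬝ᵥ w ≤ u ⬝ᵥ w :=
  sum_le_sum fun i _ ↦ mul_le_mul_of_nonpos_right (huv i) (hw i)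

variable [DecidableEq ι]

theorem tsum_vecMul_pow_vecMul {R : Type*} [CommRing R] [TopologicalSpace R]
    [IsTopologicalRing R] [T2Space R] (B : Matrix ι ι R) (w : ι → R)
    (h : Summable fun n ↦ w ᵥ* B ^ n) :
    (∑' n, w ᵥ* B ^ n) ᵥ* B = (∑' n, w ᵥ* B ^ n) - w := by
  have hshift : (∑' n, w ᵥ* B ^ n) ᵥ* B = ∑' n, w ᵥ* B ^ (n + 1) :=
    calc (∑' n, w ᵥ* B ^ n) ᵥ* B = B.vecMulLinear (∑' n, w ᵥ* B ^ n) := rfl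
      _ = ∑' n, B.vecMulLinear (w ᵥ* B ^ n) :=
        (h.hasSum.map _ (continuous_id.matrix_vecMul continuous_const)).tsum_eq.symm
      _ = ∑' n, w ᵥ* B ^ (n + 1) := by simp [vecMul_vecMul, pow_succ]
  rw [hshift, h.tsum_eq_zero_add, pow_zero, vecMul_one, add_sub_cancel_left]

variable {K : Matrix ι ι ℝ} {r : ℝ} {w : ι → ℝ}

theorem vecMul_pow_smul_nonneg (hK : K ∈ rowStochastic ℝ ι) (hr : 0 ≤ r) (hw : 0 ≤ w)
    (n : ℕ) : 0 ≤ w ᵥ* (r • K) ^ n := by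
  rw [smul_pow, vecMul_smul]
  exact smul_nonneg (pow_nonneg hr n) (nonneg_vecMul_of_mem_rowStochastic (pow_mem hK n) hw)

theorem summable_vecMul_pow_smul (hK : K ∈ rowStochastic ℝ ι) (hr0 : 0 ≤ r) (hr1 : r < 1)
    (hw : 0 ≤ w) : Summable fun n ↦ w ᵥ* (r • K) ^ n := by
  refine Pi.summable.mpr fun i ↦ .of_nonneg_of_le (fun n ↦ vecMul_pow_smul_nonneg hK hr0 hw n i)
    (fun n ↦ ?_) ((summable_geometric_of_lt_one hr0 hr1).mul_right (∑ j, w j))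
  have hKn : K ^ n ∈ rowStochastic ℝ ι := pow_mem hK n
  have hmass : ∑ j, (w ᵥ* K ^ n) j = ∑ j, w j := by
    rw [← dotProduct_one, ← dotProduct_one, ← dotProduct_mulVec, hKn.2]
  rw [smul_pow, vecMul_smul, Pi.smul_apply, smul_eq_mul, ← hmass]
  exact mul_le_mul_of_nonneg_left
    (single_le_sum (fun j _ ↦ nonneg_vecMul_of_mem_rowStochastic hKn hw j) (mem_univ i))
    (pow_nonneg hr0 n)

theorem tsum_vecMul_pow_smul_vecMul_le (hK : K ∈ rowStochastic ℝ ι) (hr0 : 0 ≤ r)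
    (hr1 : r < 1) (hw : 0 ≤ w) :
    (∑' n, w ᵥ* (r • K) ^ n) ᵥ* (r • K) ≤ ∑' n, w ᵥ* (r • K) ^ n := by
  rw [tsum_vecMul_pow_vecMul _ _ (summable_vecMul_pow_smul hK hr0 hr1 hw)]
  exact sub_le_self _ hw

end Matrix

section Lyapunov

variable {ι : Type*} [Fintype ι] [DecidableEq ι]

noncomputable def lyapunovVector (β : ℝ) (M : Matrix ι ι ℝ) (w : ι → ℝ) : ι → ℝ :=
  ∑' i : ℕ, (β⁻¹ ^ i) • (Mᵀ ^ i).mulVec w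

theorem lyapunovVector_eq_tsum_vecMul (β : ℝ) (M : Matrix ι ι ℝ) (w : ι → ℝ) :
    lyapunovVector β M w = ∑' n, w ᵥ* (β⁻¹ • M) ^ n := by
  simp only [lyapunovVector, ← transpose_pow, mulVec_transpose, smul_pow, vecMul_smul]

variable {K : Matrix ι ι ℝ} {γ β : ℝ} {w : ι → ℝ}

theorem lyapunovVector_nonneg (hK : K ∈ rowStochastic ℝ ι) (hγ : 0 ≤ γ) (hβ : 0 ≤ β)
    (hw : 0 ≤ w) : 0 ≤ lyapunovVector β (γ • K) w := by
  rw [lyapunovVector_eq_tsum_vecMul, smul_smul]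
  exact tsum_nonneg (vecMul_pow_smul_nonneg hK (by positivity) hw)

theorem transpose_mulVec_lyapunovVector_le (hK : K ∈ rowStochastic ℝ ι) (hγ : 0 ≤ γ)
    (hγβ : γ < β) (hw : 0 ≤ w) :
    (γ • K)ᵀ *ᵥ lyapunovVector β (γ • K) w ≤ β • lyapunovVector β (γ • K) w := by
  have hβ : 0 < β := hγ.trans_lt hγβ
  have hr : β⁻¹ * γ < 1 := by rwa [inv_mul_lt_iff₀ hβ, mul_one]
  rw [lyapunovVector_eq_tsum_vecMul, smul_smul, mulVec_transpose]
  set v := ∑' n, w ᵥ* ((β⁻¹ * γ) • K) ^ n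
  calc v ᵥ* (γ • K) = β • v ᵥ* ((β⁻¹ * γ) • K) := by
        rw [vecMul_smul, vecMul_smul, smul_smul, mul_inv_cancel_left₀ hβ.ne']
    _ ≤ β • v :=
        smul_le_smul_of_nonneg_left (tsum_vecMul_pow_smul_vecMul_le hK (by positivity) hr hw)
          hβ.le

end Lyapunov

section MDP

variable {S A : Type*} [Fintype S] [Fintype A]

theorem polMat_mulVec_apply [DecidableEq A] (γ : ℝ) (P : S → A → S → ℝ) (π : S → A)
    (x : S × A → ℝ) (p : S × A) :
    (polMat γ P π *ᵥ x) p = γ * ∑ s', P p.1 p.2 s' * x (s', π s') := by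
  simp [polMat, mulVec, dotProduct, Fintype.sum_prod_type, ite_mul, mul_sum, mul_assoc]

theorem polMat_eq_smul [DecidableEq A] (γ : ℝ) (P : S → A → S → ℝ) (π : S → A) :
    polMat γ P π = γ • polMat 1 P π := by
  ext p q
  simp only [polMat, of_apply, Matrix.smul_apply, smul_eq_mul]
  split_ifs <;> ring

variable {γ : ℝ} {P : S → A → S → ℝ}

theorem polMat_one_mem_rowStochastic [DecidableEq S] [DecidableEq A] (π : S → A)
    (hP0 : ∀ s a s', 0 ≤ P s a s') (hP1 : ∀ s a, ∑ s', P s a s' = 1) :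
    polMat 1 P π ∈ rowStochastic ℝ (S × A) := by
  refine ⟨fun p q ↦ ?_, funext fun p ↦ ?_⟩
  · simp only [polMat, of_apply, one_mul]
    split_ifs
    exacts [hP0 _ _ _, le_rfl]
  · simp [polMat_mulVec_apply, hP1]

variable [Nonempty A] {R : S → A → ℝ}

theorem bellman_mono (hγ : 0 ≤ γ) (hP0 : ∀ s a s', 0 ≤ P s a s') : Monotone (bellman γ P R) :=
  fun Q Q' hQ p ↦ by
    unfold bellman
    gcongr with s' _ a
    · exact hP0 _ _ _
    · exact hQ (s', a)

theorem polMat_mulVec_sub_le [DecidableEq A] (hγ : 0 ≤ γ) (hP0 : ∀ s a s', 0 ≤ P s a s')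
    {Q' : S × A → ℝ} {π : S → A}
    (hπ : ∀ s, Q' (s, π s) = univ.sup' univ_nonempty fun a ↦ Q' (s, a)) (Q : S × A → ℝ) :
    polMat γ P π *ᵥ (Q - Q') ≤ bellman γ P R Q - bellman γ P R Q' := fun p ↦ by
  simp only [polMat_mulVec_apply, bellman, Pi.sub_apply, add_sub_add_left_eq_sub, ← mul_sub,
    ← sum_sub_distrib]
  gcongr with s' _
  · exact hP0 _ _ _
  · exact le_sup' (fun a ↦ Q (s', a)) (mem_univ _)
  · exact (hπ s').ge

end MDP

theorem stmt16_general {S A : Type*} [Fintype S] [Fintype A] [Nonempty A]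
    [DecidableEq S] [DecidableEq A]
    (γ ε : ℝ) (hγ0 : 0 ≤ γ) (hε : 0 < ε)
    (P : S → A → S → ℝ) (hP0 : ∀ s a s', 0 ≤ P s a s')
    (hP1 : ∀ s a, ∑ s' : S, P s a s' = 1)
    (R : S → A → ℝ)
    (Qstar : S × A → ℝ) (hfix : bellman γ P R Qstar = Qstar)
    (πstar : S → A)
    (hgreedy : ∀ s : S,
      Qstar (s, πstar s) = Finset.univ.sup' Finset.univ_nonempty (fun a => Qstar (s, a)))
    (w : S × A → ℝ) (hw : ∀ p, 0 < w p)
    (v : S × A → ℝ)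
    (hv : v = ∑' i : ℕ, ((γ + ε)⁻¹ ^ i) • ((polMat γ P πstar)ᵀ ^ i).mulVec w) :
    ∀ Q : S × A → ℝ, Q ≤ Qstar →
      (γ + ε) * (v ⬝ᵥ (Q - Qstar)) ≤ v ⬝ᵥ (bellman γ P R Q - Qstar) ∧
        v ⬝ᵥ (bellman γ P R Q - Qstar) ≤ 0 := by
  intro Q hQ
  have hK := polMat_one_mem_rowStochastic πstar hP0 hP1
  have hw0 : 0 ≤ w := fun p ↦ (hw p).le
  have hvK : v = lyapunovVector (γ + ε) (γ • polMat 1 P πstar) w := by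
    rw [hv, ← polMat_eq_smul]
    rfl
  have hv0 : 0 ≤ v := hvK ▸ lyapunovVector_nonneg hK hγ0 (add_nonneg hγ0 hε.le) hw0
  have hMv : (polMat γ P πstar)ᵀ *ᵥ v ≤ (γ + ε) • v := by
    rw [hvK, polMat_eq_smul γ]
    exact transpose_mulVec_lyapunovVector_le hK hγ0 (lt_add_of_pos_right γ hε) hw0
  have hFQ : bellman γ P R Q - Qstar ≤ 0 :=
    sub_nonpos.mpr (hfix ▸ bellman_mono hγ0 hP0 hQ)
  have hMQ : polMat γ P πstar *ᵥ (Q - Qstar) ≤ bellman γ P R Q - Qstar := by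
    simpa only [hfix] using polMat_mulVec_sub_le (R := R) hγ0 hP0 hgreedy Q
  constructor
  · calc (γ + ε) * (v ⬝ᵥ (Q - Qstar)) = ((γ + ε) • v) ⬝ᵥ (Q - Qstar) := by
          rw [smul_dotProduct, smul_eq_mul]
      _ ≤ ((polMat γ P πstar)ᵀ *ᵥ v) ⬝ᵥ (Q - Qstar) :=
        dotProduct_le_dotProduct_of_nonpos_right hMv (sub_nonpos.mpr hQ)
      _ = v ⬝ᵥ (polMat γ P πstar *ᵥ (Q - Qstar)) := by rw [mulVec_transpose, dotProduct_mulVec]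
      _ ≤ v ⬝ᵥ (bellman γ P R Q - Qstar) := dotProduct_le_dotProduct_of_nonneg_left hMQ hv0
  · simpa only [dotProduct_zero] using dotProduct_le_dotProduct_of_nonneg_left hFQ hv0

/-- linear Lyapunov inequality on the shifted orthant: if `F Q* = Q*`, `π*`
is greedy w.r.t. `Q*`, `γ + ε < 1`, `w > 0` entrywise, and
`v = Σ_i (γ+ε)^{−i} (A_{π*}ᵀ)ⁱ w`, then `Q ≤ Q*` implies
`(γ+ε) vᵀ(Q − Q*) ≤ vᵀ(F Q − Q*) ≤ 0`. -/
theorem stmt16 {S A : Type*} [Fintype S] [Fintype A] [Nonempty S] [Nonempty A]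
    [DecidableEq S] [DecidableEq A]
    (γ ε : ℝ) (hγ0 : 0 ≤ γ) (hγ1 : γ < 1) (hε : 0 < ε) (hγε : γ + ε < 1)
    (P : S → A → S → ℝ) (hP0 : ∀ s a s', 0 ≤ P s a s')
    (hP1 : ∀ s a, ∑ s' : S, P s a s' = 1)
    (R : S → A → ℝ)
    (Qstar : S × A → ℝ) (hfix : bellman γ P R Qstar = Qstar)
    (πstar : S → A)
    (hgreedy : ∀ s : S,
      Qstar (s, πstar s) = Finset.univ.sup' Finset.univ_nonempty (fun a => Qstar (s, a)))
    (w : S × A → ℝ) (hw : ∀ p, 0 < w p)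
    (v : S × A → ℝ)
    (hv : v = ∑' i : ℕ, ((γ + ε)⁻¹ ^ i) • ((polMat γ P πstar)ᵀ ^ i).mulVec w) :
    ∀ Q : S × A → ℝ, Q ≤ Qstar →
      (γ + ε) * (v ⬝ᵥ (Q - Qstar)) ≤ v ⬝ᵥ (bellman γ P R Q - Qstar) ∧
        v ⬝ᵥ (bellman γ P R Q - Qstar) ≤ 0 :=
  stmt16_general γ ε hγ0 hε P hP0 hP1 R Qstar hfix πstar hgreedy w hw v hv
end

section
/- Let Q* be a fixed point of the Bellman operator F and let π* be a greedy policy with respect to Q*. Then for every Q ∈ ℝ^{S×A} and every greedy policy π_Q with respect to Q, the affine term b_Q := A_{π_Q} Q* − A_{π*} Q* of the switched affine system representation F Q − Q* = A_{π_Q}(Q − Q*) + b_Q is entrywise nonpositive: b_Q ≤ 0. -/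
open Finset Matrix

/-- the affine term `b_Q = A_{π_Q} Q* − A_{π*} Q*` of the switched affine
system representation is entrywise nonpositive: `b_Q ≤ 0`. -/
theorem stmt18 {S A : Type*} [Fintype S] [Fintype A] [Nonempty S] [Nonempty A]
    [DecidableEq A]
    (γ : ℝ) (hγ0 : 0 ≤ γ) (hγ1 : γ < 1)
    (P : S → A → S → ℝ) (hP0 : ∀ s a s', 0 ≤ P s a s')
    (hP1 : ∀ s a, ∑ s' : S, P s a s' = 1)
    (R : S → A → ℝ)
    (Qstar : S × A → ℝ) (hfix : bellman γ P R Qstar = Qstar)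
    (πstar : S → A)
    (hgreedy : ∀ s : S,
      Qstar (s, πstar s) = Finset.univ.sup' Finset.univ_nonempty (fun a => Qstar (s, a))) :
    ∀ (Q : S × A → ℝ) (πQ : S → A),
      (∀ s : S, Q (s, πQ s) = Finset.univ.sup' Finset.univ_nonempty (fun a => Q (s, a))) →
      (polMat γ P πQ).mulVec Qstar - (polMat γ P πstar).mulVec Qstar ≤ 0 := by
  intro Q πQ _
  intro p
  have key : ∀ π : S → A, (polMat γ P π).mulVec Qstar p
      = γ * ∑ s' : S, P p.1 p.2 s' * Qstar (s', π s') := by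
    intro π
    simp only [Matrix.mulVec, dotProduct, polMat, Matrix.of_apply]
    rw [Fintype.sum_prod_type]
    rw [Finset.mul_sum]
    refine Finset.sum_congr rfl fun s' _ => ?_
    simp only [ite_mul, zero_mul]
    rw [Finset.sum_ite_eq' Finset.univ (π s') (fun a' => γ * P p.1 p.2 s' * Qstar (s', a'))]
    simp [mul_assoc]
  simp only [Pi.sub_apply, Pi.zero_apply, sub_nonpos, key]
  refine mul_le_mul_of_nonneg_left (Finset.sum_le_sum fun s' _ => ?_) hγ0
  refine mul_le_mul_of_nonneg_left ?_ (hP0 _ _ _)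
  rw [hgreedy s']
  exact Finset.le_sup' (fun a => Qstar (s', a)) (Finset.mem_univ _)
end

section
/- Let Q* be a fixed point of the Bellman operator F and let π_Q be a greedy policy with respect to Q (i.e., Q(s,π_Q(s)) = max_{a∈A} Q(s,a) for all s). Then the value iteration update admits the exact switched affine system representation F Q − Q* = A_{π_Q}(Q − Q*) + b_Q, where b_Q = A_{π_Q} Q* − A_{π*} Q* and π* is any greedy policy with respect to Q*. -/
open Finset Matrix

lemma mulVec_polMat {S A : Type*} [Fintype S] [Fintype A] [DecidableEq A]
    (γ : ℝ) (P : S → A → S → ℝ) (π : S → A) (x : S × A → ℝ) (p : S × A) :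
    (polMat γ P π).mulVec x p = γ * ∑ s' : S, P p.1 p.2 s' * x (s', π s') := by
  simp only [Matrix.mulVec, dotProduct, polMat, Matrix.of_apply]
  rw [Fintype.sum_prod_type, Finset.mul_sum]
  refine Finset.sum_congr rfl fun s' _ => ?_
  rw [Finset.sum_eq_single (π s')]
  · simp [mul_assoc]
  · intro a _ ha; simp [ha]
  · simp

/-- exact switched affine system representation of value iteration:
`F Q − Q* = A_{π_Q}(Q − Q*) + b_Q` with `b_Q = A_{π_Q} Q* − A_{π*} Q*`, whenever
`F Q* = Q*`, `π_Q` is greedy w.r.t. `Q` and `π*` is greedy w.r.t. `Q*`. -/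
theorem stmt19 {S A : Type*} [Fintype S] [Fintype A] [Nonempty S] [Nonempty A]
    [DecidableEq A]
    (γ : ℝ) (hγ0 : 0 ≤ γ) (hγ1 : γ < 1)
    (P : S → A → S → ℝ) (hP0 : ∀ s a s', 0 ≤ P s a s')
    (hP1 : ∀ s a, ∑ s' : S, P s a s' = 1)
    (R : S → A → ℝ)
    (Qstar : S × A → ℝ) (hfix : bellman γ P R Qstar = Qstar)
    (πstar : S → A)
    (hgreedystar : ∀ s : S,
      Qstar (s, πstar s) = Finset.univ.sup' Finset.univ_nonempty (fun a => Qstar (s, a)))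
    (Q : S × A → ℝ) (πQ : S → A)
    (hgreedyQ : ∀ s : S,
      Q (s, πQ s) = Finset.univ.sup' Finset.univ_nonempty (fun a => Q (s, a))) :
    bellman γ P R Q - Qstar =
      (polMat γ P πQ).mulVec (Q - Qstar) +
        ((polMat γ P πQ).mulVec Qstar - (polMat γ P πstar).mulVec Qstar) := by
  funext p
  have hQs : Qstar p = R p.1 p.2 +
      γ * ∑ s' : S, P p.1 p.2 s' * Qstar (s', πstar s') := by
    conv_lhs => rw [← hfix]
    simp only [bellman]
    congr 1
    congr 1
    exact Finset.sum_congr rfl fun s' _ => by rw [hgreedystar s']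
  simp only [Pi.add_apply, Pi.sub_apply, mulVec_polMat, hQs]
  have h1 : ∀ s' : S, (Q - Qstar) (s', πQ s') = Q (s', πQ s') - Qstar (s', πQ s') :=
    fun _ => rfl
  simp only [bellman, h1]
  have key : ∑ s' : S, P p.1 p.2 s' * Finset.univ.sup' Finset.univ_nonempty (fun a' => Q (s', a'))
      = ∑ s' : S, P p.1 p.2 s' * Q (s', πQ s') :=
    Finset.sum_congr rfl fun s' _ => by rw [hgreedyQ s']
  rw [key]
  simp only [Finset.mul_sum, mul_sub]
  ring_nf
  rw [Finset.sum_sub_distrib]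
  ring
end
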